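/- Doubly robust identification (Theorem 1, DR part): under Assumptions SO, NA, and DDD-CPT, for every g ∈ 𝒢_trt, every t with g ≤ t ≤ T, and every g_c ∈ 𝒮 with g_c > t, ATT(g,t) = ATT_dr,g_c(g,t). -/

import Mathlib

open MeasureTheory ProbabilityTheory

namespace TripleDiff

/-- A staggered triple-differences (DDD) setup: a probability space carrying an
enabling-group variable `S` with values in a finite set `𝒮 ⊆ {2,…,T} ∪ {∞}`
(`∞` is coded as `⊤ : ℕ∞`), an eligibility indicator `Q ∈ {0,1}`, covariates
`X ∈ ℝ^d`, and integrable potential outcomes `Y_t(g)`, with every cell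
`{S = g, Q = q}` having positive probability. -/
structure Setup (Ω : Type*) [MeasurableSpace Ω] (d : ℕ) where
  /-- the underlying probability measure -/
  μ : Measure Ω
  isProb : IsProbabilityMeasure μ
  /-- the number of time periods -/
  T : ℕ
  hT : 2 ≤ T
  /-- the (finite) support of the enabling variable -/
  𝒮 : Finset ℕ∞
  h𝒮 : ∀ g ∈ 𝒮, g ≠ ⊤ → ∃ n : ℕ, 2 ≤ n ∧ n ≤ T ∧ g = (n : ℕ∞)
  htop : (⊤ : ℕ∞) ∈ 𝒮
  /-- enabling group: first period at which treatment is enabled -/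
  S : Ω → ℕ∞
  hS : Measurable S
  hSmem : ∀ ω, S ω ∈ 𝒮
  /-- eligibility indicator -/
  Q : Ω → ℕ
  hQ : Measurable Q
  hQval : ∀ ω, Q ω ≤ 1
  /-- covariates -/
  X : Ω → Fin d → ℝ
  hX : Measurable X
  /-- potential outcomes `Y_t(g)` -/
  Ypo : ℕ∞ → ℕ → Ω → ℝ
  hYpo : ∀ g ∈ 𝒮, ∀ t : ℕ, 1 ≤ t → t ≤ T → Integrable (Ypo g t) μ
  hcells : ∀ g ∈ 𝒮, ∀ q ≤ 1, 0 < μ {ω | S ω = g ∧ Q ω = q}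

namespace Setup

variable {Ω : Type*} [MeasurableSpace Ω] {d : ℕ} (E : Setup Ω d)

/-- the cell `{S = g, Q = q}` -/
def cell (g : ℕ∞) (q : ℕ) : Set Ω := {ω | E.S ω = g ∧ E.Q ω = q}

/-- first treatment period: `G = S` if `Q = 1` and `G = ∞` if `Q = 0` -/
def G (ω : Ω) : ℕ∞ := if E.Q ω = 1 then E.S ω else ⊤

/-- observed outcome `Y_t = Σ_g 1{G = g} Y_t(g)` -/
def Yobs (t : ℕ) (ω : Ω) : ℝ := E.Ypo (E.G ω) t ω

/-- the σ-algebra generated by the covariates `X` -/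
def mX : MeasurableSpace Ω := MeasurableSpace.comap E.X inferInstance

/-- conditional cell probability `P(S = g, Q = q | X)` given `σ(X)` -/
noncomputable def pX (g : ℕ∞) (q : ℕ) : Ω → ℝ :=
  (E.μ)[(E.cell g q).indicator (fun _ => (1 : ℝ)) | E.mX]

/-- group-time average treatment effect `ATT(g,t) = E[Y_t(g) − Y_t(∞) | S = g, Q = 1]` -/
noncomputable def ATT (g t : ℕ) : ℝ :=
  ∫ ω, (E.Ypo (g : ℕ∞) t ω - E.Ypo ⊤ t ω) ∂((E.μ)[|E.cell (g : ℕ∞) 1])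

/-- outcome-regression nuisance `m^{g',q'}(X) = E[Y_t − Y_{g−1} | S = g', Q = q', X]`,
for the fixed pair `(g,t)` -/
noncomputable def mReg (g t : ℕ) (g' : ℕ∞) (q' : ℕ) : Ω → ℝ :=
  ((E.μ)[|E.cell g' q'])[fun ω => E.Yobs t ω - E.Yobs (g - 1) ω | E.mX]

/-- treated weight `w_trt = 1{S = g, Q = 1} / E[1{S = g, Q = 1}]` -/
noncomputable def wTrt (g : ℕ) : Ω → ℝ := fun ω =>
  (E.cell (g : ℕ∞) 1).indicator (fun _ => (1 : ℝ)) ω / (E.μ (E.cell (g : ℕ∞) 1)).toReal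

/-- unnormalized comparison (odds) weight `1{S = g', Q = q'}·p^{g,1}(X)/p^{g',q'}(X)` -/
noncomputable def oddsW (g : ℕ) (g' : ℕ∞) (q' : ℕ) : Ω → ℝ := fun ω =>
  (E.cell g' q').indicator (fun _ => (1 : ℝ)) ω * E.pX (g : ℕ∞) 1 ω / E.pX g' q' ω

/-- normalized comparison weight `w_{g',q'}` -/
noncomputable def wComp (g : ℕ) (g' : ℕ∞) (q' : ℕ) : Ω → ℝ := fun ω =>
  E.oddsW g g' q' ω / ∫ ω', E.oddsW g g' q' ω' ∂E.μ

/-- doubly robust DDD estimand `ATT_dr,g_c(g,t)` with comparison group `g_c` -/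
noncomputable def ATTdr (g t : ℕ) (gc : ℕ∞) : ℝ :=
  (∫ ω, (E.wTrt g ω - E.wComp g (g : ℕ∞) 0 ω) *
      (E.Yobs t ω - E.Yobs (g - 1) ω - E.mReg g t (g : ℕ∞) 0 ω) ∂E.μ)
  + (∫ ω, (E.wTrt g ω - E.wComp g gc 1 ω) *
      (E.Yobs t ω - E.Yobs (g - 1) ω - E.mReg g t gc 1 ω) ∂E.μ)
  - (∫ ω, (E.wTrt g ω - E.wComp g gc 0 ω) *
      (E.Yobs t ω - E.Yobs (g - 1) ω - E.mReg g t gc 0 ω) ∂E.μ)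

/-- Assumption SO (strong overlap): there is `ε > 0` with
`P(S = g, Q = q | X) > ε` a.s. for every cell. -/
def StrongOverlap : Prop :=
  ∃ ε > (0 : ℝ), ∀ g ∈ E.𝒮, ∀ q ≤ 1, ∀ᵐ ω ∂E.μ, ε < E.pX g q ω

/-- Assumption NA (no anticipation): for every treated group `g` and every
pre-treatment period `t < g`,
`E[Y_t(g) | S = g, Q = 1, X] = E[Y_t(∞) | S = g, Q = 1, X]` a.s. -/
def NoAnticipation : Prop :=
  ∀ g : ℕ, (g : ℕ∞) ∈ E.𝒮 → ∀ t : ℕ, 1 ≤ t → t < g →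
    ((E.μ)[|E.cell (g : ℕ∞) 1])[E.Ypo (g : ℕ∞) t | E.mX]
      =ᵐ[E.μ] ((E.μ)[|E.cell (g : ℕ∞) 1])[E.Ypo ⊤ t | E.mX]

/-- Assumption DDD-CPT (conditional DDD parallel trends): for each treated group
`g`, each `g' ∈ 𝒮` and period `t` with `t ≥ g` and `g' > max{g,t}`, a.s.
`E[ΔY_t(∞)|S=g,Q=1,X] − E[ΔY_t(∞)|S=g,Q=0,X]
  = E[ΔY_t(∞)|S=g',Q=1,X] − E[ΔY_t(∞)|S=g',Q=0,X]`. -/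
def ParallelTrends : Prop :=
  ∀ g : ℕ, (g : ℕ∞) ∈ E.𝒮 → ∀ g' ∈ E.𝒮, ∀ t : ℕ, g ≤ t → t ≤ E.T →
    max (g : ℕ∞) (t : ℕ∞) < g' →
    (fun ω =>
        (((E.μ)[|E.cell (g : ℕ∞) 1])[fun ω' => E.Ypo ⊤ t ω' - E.Ypo ⊤ (t - 1) ω' | E.mX]) ω
          - (((E.μ)[|E.cell (g : ℕ∞) 0])[fun ω' => E.Ypo ⊤ t ω' - E.Ypo ⊤ (t - 1) ω' | E.mX]) ω)
      =ᵐ[E.μ]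
    (fun ω =>
        (((E.μ)[|E.cell g' 1])[fun ω' => E.Ypo ⊤ t ω' - E.Ypo ⊤ (t - 1) ω' | E.mX]) ω
          - (((E.μ)[|E.cell g' 0])[fun ω' => E.Ypo ⊤ t ω' - E.Ypo ⊤ (t - 1) ω' | E.mX]) ω)

end Setup

end TripleDiff

namespace TripleDiff
namespace Setup
variable {Ω : Type*} [MeasurableSpace Ω] {d : ℕ} (E : Setup Ω d)

lemma hmle : E.mX ≤ ‹MeasurableSpace Ω› := E.hX.comap_le

lemma measurableSet_cell (g' : ℕ∞) (q' : ℕ) : MeasurableSet (E.cell g' q') :=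
  (E.hS (measurableSet_singleton g')).inter (E.hQ (measurableSet_singleton q'))

lemma cell_pos {g' : ℕ∞} {q' : ℕ} (hg' : g' ∈ E.𝒮) (hq : q' ≤ 1) :
    E.μ (E.cell g' q') ≠ 0 := (E.hcells g' hg' q' hq).ne'

lemma cell_ne_top (g' : ℕ∞) (q' : ℕ) : E.μ (E.cell g' q') ≠ ⊤ :=
  haveI := E.isProb; measure_ne_top _ _

lemma cond_prob {g' : ℕ∞} {q' : ℕ} (hg' : g' ∈ E.𝒮) (hq : q' ≤ 1) :
    IsProbabilityMeasure (E.μ[|E.cell g' q']) :=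
  cond_isProbabilityMeasure_of_finite (E.cell_pos hg' hq) (E.cell_ne_top g' q')

lemma integral_cond (c : Set Ω) (f : Ω → ℝ) :
    ∫ ω, f ω ∂(E.μ[|c]) = (E.μ c).toReal⁻¹ • ∫ ω in c, f ω ∂E.μ := by
  rw [ProbabilityTheory.cond, integral_smul_measure, ENNReal.toReal_inv]

lemma integrable_cond {c : Set Ω} (hc0 : E.μ c ≠ 0) {f : Ω → ℝ}
    (hf : Integrable f E.μ) : Integrable f (E.μ[|c]) := by
  rw [ProbabilityTheory.cond]
  exact (hf.restrict).smul_measure (ENNReal.inv_ne_top.2 hc0)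

lemma ae_cond_of_ae {c : Set Ω} {p : Ω → Prop} (h : ∀ᵐ ω ∂E.μ, p ω) :
    ∀ᵐ ω ∂(E.μ[|c]), p ω := cond_absolutelyContinuous.ae_le h

lemma ae_cond_mem {c : Set Ω} (hc : MeasurableSet c) : ∀ᵐ ω ∂(E.μ[|c]), ω ∈ c := by
  rw [ae_iff, ProbabilityTheory.cond]
  simp only [Measure.smul_apply]
  rw [show {a | a ∉ c} = cᶜ from rfl, Measure.restrict_apply hc.compl,
    Set.compl_inter_self, measure_empty]
  simp

open scoped ENNReal NNReal in
lemma integrable_indicator_one {c : Set Ω} (hc : MeasurableSet c) :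
    Integrable (c.indicator (fun _ => (1:ℝ))) E.μ :=
  haveI := E.isProb
  (integrable_const (1:ℝ)).indicator hc

lemma pX_stronglyMeasurable (g' : ℕ∞) (q' : ℕ) : StronglyMeasurable[E.mX] (E.pX g' q') :=
  stronglyMeasurable_condExp

lemma pX_nonneg (g' : ℕ∞) (q' : ℕ) : ∀ᵐ ω ∂E.μ, 0 ≤ E.pX g' q' ω :=
  condExp_nonneg (ae_of_all _ fun ω => Set.indicator_nonneg (fun _ _ => zero_le_one) ω)

lemma pX_le_one (g' : ℕ∞) (q' : ℕ) : ∀ᵐ ω ∂E.μ, E.pX g' q' ω ≤ 1 := by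
  haveI := E.isProb
  have h := condExp_mono (m := E.mX) (μ := E.μ)
    (E.integrable_indicator_one (E.measurableSet_cell g' q')) (integrable_const (1:ℝ))
    (ae_of_all _ fun ω => by
      by_cases hω : ω ∈ E.cell g' q' <;> simp [Set.indicator, hω])
  filter_upwards [h] with ω h1
  rw [condExp_const E.hmle (1:ℝ)] at h1
  exact h1

lemma overlap_set_le {g' : ℕ∞} {q' : ℕ} {ε : ℝ} (hε : 0 < ε)
    (hov : ∀ᵐ ω ∂E.μ, ε < E.pX g' q' ω) {A : Set Ω} (hA : MeasurableSet[E.mX] A) :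
    ENNReal.ofReal ε * E.μ A ≤ E.μ (E.cell g' q' ∩ A) := by
  haveI := E.isProb
  have hAm : MeasurableSet A := E.hmle A hA
  have h1 : ∫ ω in A, E.pX g' q' ω ∂E.μ
      = ∫ ω in A, (E.cell g' q').indicator (fun _ => (1:ℝ)) ω ∂E.μ :=
    setIntegral_condExp E.hmle (E.integrable_indicator_one (E.measurableSet_cell g' q')) hA
  have h2 : ∫ ω in A, (E.cell g' q').indicator (fun _ => (1:ℝ)) ω ∂E.μ
      = (E.μ (E.cell g' q' ∩ A)).toReal := by
    rw [integral_indicator_const (1:ℝ) (E.measurableSet_cell g' q'),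
      measureReal_restrict_apply (E.measurableSet_cell g' q'), smul_eq_mul, mul_one,
        measureReal_def]
  have h3 : ε * (E.μ A).toReal ≤ ∫ ω in A, E.pX g' q' ω ∂E.μ := by
    have : ∫ _ω in A, ε ∂E.μ ≤ ∫ ω in A, E.pX g' q' ω ∂E.μ :=
      integral_mono_ae (integrable_const ε) integrable_condExp.integrableOn
        (ae_restrict_of_ae (hov.mono fun ω h => h.le))
    simpa [mul_comm, measureReal_def] using this
  have h4 : ε * (E.μ A).toReal ≤ (E.μ (E.cell g' q' ∩ A)).toReal := by
    rw [← h2, ← h1]; exact h3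
  rw [← ENNReal.toReal_le_toReal (by finiteness) (measure_ne_top _ _),
    ENNReal.toReal_mul, ENNReal.toReal_ofReal hε.le]
  exact h4

open scoped ENNReal in
lemma overlap_lintegral_le {g' : ℕ∞} {q' : ℕ} {ε : ℝ} (hε : 0 < ε)
    (hov : ∀ᵐ ω ∂E.μ, ε < E.pX g' q' ω) {φ : Ω → ℝ≥0∞}
    (hφ : Measurable[E.mX] φ) :
    ∫⁻ ω, φ ω ∂E.μ ≤ (ENNReal.ofReal ε)⁻¹ * ∫⁻ ω, φ ω ∂(E.μ.restrict (E.cell g' q')) := by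
  have hεne : ENNReal.ofReal ε ≠ 0 := by simp [hε]
  have hle : E.μ.trim E.hmle
      ≤ (ENNReal.ofReal ε)⁻¹ • ((E.μ.restrict (E.cell g' q')).trim E.hmle) := by
    refine Measure.le_intro fun A hA _ => ?_
    rw [trim_measurableSet_eq E.hmle hA, Measure.smul_apply, trim_measurableSet_eq E.hmle hA,
      Measure.restrict_apply (E.hmle A hA), smul_eq_mul, Set.inter_comm]
    have h := E.overlap_set_le hε hov hA
    calc E.μ A = (ENNReal.ofReal ε)⁻¹ * (ENNReal.ofReal ε * E.μ A) := by
          rw [← mul_assoc, ENNReal.inv_mul_cancel hεne ENNReal.ofReal_ne_top, one_mul]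
      _ ≤ (ENNReal.ofReal ε)⁻¹ * E.μ (E.cell g' q' ∩ A) := mul_le_mul_right h _
  calc ∫⁻ ω, φ ω ∂E.μ = ∫⁻ ω, φ ω ∂(E.μ.trim E.hmle) := (lintegral_trim E.hmle hφ).symm
    _ ≤ ∫⁻ ω, φ ω ∂((ENNReal.ofReal ε)⁻¹ • ((E.μ.restrict (E.cell g' q')).trim E.hmle)) :=
        lintegral_mono' hle le_rfl
    _ = (ENNReal.ofReal ε)⁻¹ * ∫⁻ ω, φ ω ∂(E.μ.restrict (E.cell g' q')) := by
        rw [lintegral_smul_measure, lintegral_trim E.hmle hφ, smul_eq_mul]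

lemma overlap_ae_eq {g' : ℕ∞} {q' : ℕ} {ε : ℝ} (hε : 0 < ε)
    (hov : ∀ᵐ ω ∂E.μ, ε < E.pX g' q' ω) {f h : Ω → ℝ}
    (hf : StronglyMeasurable[E.mX] f) (hh : StronglyMeasurable[E.mX] h)
    (heq : f =ᵐ[E.μ[|E.cell g' q']] h) : f =ᵐ[E.μ] h := by
  have hA : MeasurableSet[E.mX] {ω | f ω = h ω}ᶜ :=
    (hf.measurableSet_eq_fun hh).compl
  have h0 : (E.μ[|E.cell g' q']) {ω | f ω = h ω}ᶜ = 0 := heq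
  rw [cond_apply (E.measurableSet_cell g' q')] at h0
  have h1 : E.μ (E.cell g' q' ∩ {ω | f ω = h ω}ᶜ) = 0 := by
    rcases mul_eq_zero.1 h0 with h | h
    · exact absurd h (ENNReal.inv_ne_zero.2 (E.cell_ne_top g' q'))
    · exact h
  have h2 := E.overlap_set_le hε hov hA
  rw [h1, nonpos_iff_eq_zero, mul_eq_zero] at h2
  rcases h2 with h | h
  · exact absurd h (by simp [hε])
  · exact h

open scoped ENNReal in
lemma overlap_integrable {g' : ℕ∞} {q' : ℕ} {ε : ℝ} (hε : 0 < ε)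
    (hov : ∀ᵐ ω ∂E.μ, ε < E.pX g' q' ω) {f : Ω → ℝ}
    (hf : StronglyMeasurable[E.mX] f) (hint : Integrable f (E.μ[|E.cell g' q'])) :
    Integrable f E.μ := by
  refine ⟨(hf.mono E.hmle).aestronglyMeasurable, ?_⟩
  have hφ : Measurable[E.mX] (fun ω => (‖f ω‖₊ : ℝ≥0∞)) := by
    letI := E.mX; exact hf.measurable.nnnorm.coe_nnreal_ennreal
  have hres : ∫⁻ ω, (‖f ω‖₊ : ℝ≥0∞) ∂(E.μ.restrict (E.cell g' q')) < ⊤ := by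
    have h2 : ∫⁻ ω, (‖f ω‖₊ : ℝ≥0∞) ∂(E.μ[|E.cell g' q']) < ⊤ := hint.2
    rw [ProbabilityTheory.cond, lintegral_smul_measure] at h2
    by_contra hcon
    rw [not_lt, top_le_iff] at hcon
    rw [hcon, smul_eq_mul, ENNReal.mul_top (ENNReal.inv_ne_zero.2 (E.cell_ne_top g' q'))] at h2
    exact absurd h2 (by simp)
  calc ∫⁻ ω, (‖f ω‖₊ : ℝ≥0∞) ∂E.μ
      ≤ (ENNReal.ofReal ε)⁻¹ * ∫⁻ ω, (‖f ω‖₊ : ℝ≥0∞) ∂(E.μ.restrict (E.cell g' q')) :=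
        E.overlap_lintegral_le hε hov hφ
    _ < ⊤ := ENNReal.mul_lt_top (by simp [hε]) hres

lemma G_mem (ω : Ω) : E.G ω ∈ E.𝒮 := by
  unfold G; split
  · exact E.hSmem ω
  · exact E.htop

lemma measurable_G : Measurable E.G :=
  Measurable.ite (E.hQ (measurableSet_singleton 1)) E.hS measurable_const

lemma Yobs_eq_sum (t : ℕ) :
    E.Yobs t = fun ω => ∑ g' ∈ E.𝒮, ({ω' | E.G ω' = g'}).indicator (E.Ypo g' t) ω := by
  funext ω
  rw [Finset.sum_eq_single (E.G ω)]
  · exact (Set.indicator_of_mem (by simp : ω ∈ {ω' | E.G ω' = E.G ω}) _).symm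
  · intro b _ hb
    exact Set.indicator_of_notMem (by simpa using fun h => hb h.symm) _
  · intro h; exact absurd (E.G_mem ω) h

lemma integrable_Yobs (t : ℕ) (ht1 : 1 ≤ t) (htT : t ≤ E.T) : Integrable (E.Yobs t) E.μ := by
  rw [E.Yobs_eq_sum t]
  apply integrable_finset_sum
  intro g' hg'
  exact (E.hYpo g' hg' t ht1 htT).indicator (E.measurable_G (measurableSet_singleton g'))

lemma Yobs_on_cell1 {g' : ℕ∞} {t : ℕ} {ω : Ω} (hω : ω ∈ E.cell g' 1) :
    E.Yobs t ω = E.Ypo g' t ω := by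
  obtain ⟨h1, h2⟩ := hω
  simp [Yobs, G, h2, h1]

lemma Yobs_on_cell0 {g' : ℕ∞} {t : ℕ} {ω : Ω} (hω : ω ∈ E.cell g' 0) :
    E.Yobs t ω = E.Ypo ⊤ t ω := by
  obtain ⟨h1, h2⟩ := hω
  simp only [Yobs, G, h2]
  norm_num

lemma wTrt_integral (g : ℕ) (f : Ω → ℝ) :
    ∫ ω, E.wTrt g ω * f ω ∂E.μ = ∫ ω, f ω ∂(E.μ[|E.cell (g:ℕ∞) 1]) := by
  have hpt : (fun ω => E.wTrt g ω * f ω)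
      = fun ω => (E.μ (E.cell (g:ℕ∞) 1)).toReal⁻¹ • (E.cell (g:ℕ∞) 1).indicator f ω := by
    funext ω
    by_cases hω : ω ∈ E.cell (g:ℕ∞) 1
    · simp [wTrt, Set.indicator_of_mem hω, smul_eq_mul, div_eq_inv_mul]
    · simp [wTrt, Set.indicator_of_notMem hω]
  rw [hpt, integral_smul, integral_indicator (E.measurableSet_cell _ _), E.integral_cond]

lemma wComp_orth {g t : ℕ} {g' : ℕ∞} {q' : ℕ} (hg' : g' ∈ E.𝒮) (hq : q' ≤ 1)
    {ε : ℝ} (hε : 0 < ε)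
    (hov1 : ∀ᵐ ω ∂E.μ, ε < E.pX (g:ℕ∞) 1 ω)
    (hov2 : ∀ᵐ ω ∂E.μ, ε < E.pX g' q' ω)
    (hΔ : Integrable (fun ω => E.Yobs t ω - E.Yobs (g-1) ω) E.μ) :
    ∫ ω, E.wComp g g' q' ω *
      (E.Yobs t ω - E.Yobs (g-1) ω - E.mReg g t g' q' ω) ∂E.μ = 0 := by
  haveI := E.isProb
  haveI := E.cond_prob hg' hq
  set c := E.cell g' q' with hc
  set ν := E.μ[|c] with hν
  set Δ' : Ω → ℝ := fun ω => E.Yobs t ω - E.Yobs (g-1) ω with hΔ'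
  set h : Ω → ℝ := fun ω => E.pX (g:ℕ∞) 1 ω / E.pX g' q' ω with hh
  have hhsm : StronglyMeasurable[E.mX] h :=
    ((E.pX_stronglyMeasurable (g:ℕ∞) 1).measurable.div
      (E.pX_stronglyMeasurable g' q').measurable).stronglyMeasurable
  -- bound on h, a.e. μ
  have hbμ : ∀ᵐ ω ∂E.μ, ‖h ω‖ ≤ ε⁻¹ := by
    filter_upwards [hov2, E.pX_nonneg (g:ℕ∞) 1, E.pX_le_one (g:ℕ∞) 1] with ω h2 h3 h4
    have hpos : (0:ℝ) < E.pX g' q' ω := hε.trans h2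
    rw [Real.norm_eq_abs, abs_of_nonneg (div_nonneg h3 hpos.le), ← one_div]
    exact div_le_div₀ zero_le_one h4 hε h2.le
  have hbν : ∀ᵐ ω ∂ν, ‖h ω‖ ≤ ε⁻¹ := E.ae_cond_of_ae hbμ
  -- step 1 : reduce to unnormalized weights
  have hfun : (fun ω => E.wComp g g' q' ω * (Δ' ω - E.mReg g t g' q' ω))
      = fun ω => (E.oddsW g g' q' ω * (Δ' ω - E.mReg g t g' q' ω))
          / (∫ ω', E.oddsW g g' q' ω' ∂E.μ) := by
    funext ω; rw [wComp, div_mul_eq_mul_div]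
  rw [hfun, integral_div]
  -- step 2 : rewrite integrand as indicator
  have hind : (fun ω => E.oddsW g g' q' ω * (Δ' ω - E.mReg g t g' q' ω))
      = c.indicator (fun ω => h ω * (Δ' ω - E.mReg g t g' q' ω)) := by
    funext ω
    by_cases hω : ω ∈ c
    · rw [Set.indicator_of_mem hω, oddsW, Set.indicator_of_mem hω]
      simp [hh, div_mul_eq_mul_div, mul_comm, mul_div_assoc, mul_assoc]
    · rw [Set.indicator_of_notMem hω, oddsW, Set.indicator_of_notMem hω]
      simp
  rw [hind, integral_indicator (E.measurableSet_cell _ _)]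
  -- step 3 : pass to the conditional measure
  have hres : ∫ ω in c, h ω * (Δ' ω - E.mReg g t g' q' ω) ∂E.μ
      = (E.μ c).toReal • ∫ ω, h ω * (Δ' ω - E.mReg g t g' q' ω) ∂ν := by
    rw [E.integral_cond, smul_smul, mul_inv_cancel₀, one_smul]
    exact ENNReal.toReal_ne_zero.2 ⟨E.cell_pos hg' hq, E.cell_ne_top g' q'⟩
  rw [hres]
  -- step 4 : the inner integral vanishes
  have hΔν : Integrable Δ' ν := E.integrable_cond (E.cell_pos hg' hq) hΔ
  have hhfν : Integrable (fun ω => h ω * Δ' ω) ν :=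
    hΔν.bdd_mul ((hhsm.mono E.hmle).aestronglyMeasurable.mono_ac
      cond_absolutelyContinuous) hbν
  have hpull : ν[(fun ω => h ω * Δ' ω)|E.mX] =ᵐ[ν] fun ω => h ω * (ν[Δ'|E.mX]) ω := by
    have := condExp_mul_of_stronglyMeasurable_left (μ := ν) hhsm hhfν hΔν
    exact this
  have h1 : ∫ ω, h ω * (ν[Δ'|E.mX]) ω ∂ν = ∫ ω, h ω * Δ' ω ∂ν := by
    rw [← integral_congr_ae hpull, integral_condExp E.hmle]
  have h2 : ∫ ω, h ω * (Δ' ω - E.mReg g t g' q' ω) ∂ν = 0 := by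
    have hmint : Integrable (fun ω => h ω * (ν[Δ'|E.mX]) ω) ν :=
      integrable_condExp.bdd_mul ((hhsm.mono E.hmle).aestronglyMeasurable.mono_ac
        cond_absolutelyContinuous) hbν
    have hexp : (fun ω => h ω * (Δ' ω - E.mReg g t g' q' ω))
        = fun ω => h ω * Δ' ω - h ω * (ν[Δ'|E.mX]) ω := by
      funext ω; rw [mReg]; ring
    rw [hexp, integral_sub hhfν hmint, h1, sub_self]
  rw [h2, smul_zero, zero_div]

lemma PT_sum (hPT : E.ParallelTrends) {ε : ℝ} (hε : 0 < ε)
    (hov : ∀ g' ∈ E.𝒮, ∀ q' ≤ 1, ∀ᵐ ω ∂E.μ, ε < E.pX g' q' ω)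
    {g : ℕ} (hg : (g:ℕ∞) ∈ E.𝒮) (hg2 : 2 ≤ g) {gc : ℕ∞} (hgc : gc ∈ E.𝒮)
    {t : ℕ} (hgt : g ≤ t) (htT : t ≤ E.T) (hgct : (t:ℕ∞) < gc) :
    (fun ω => ((E.μ[|E.cell (g:ℕ∞) 1])[fun ω' => E.Ypo ⊤ t ω' - E.Ypo ⊤ (g-1) ω'|E.mX]) ω
        - ((E.μ[|E.cell (g:ℕ∞) 0])[fun ω' => E.Ypo ⊤ t ω' - E.Ypo ⊤ (g-1) ω'|E.mX]) ω)
      =ᵐ[E.μ]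
    (fun ω => ((E.μ[|E.cell gc 1])[fun ω' => E.Ypo ⊤ t ω' - E.Ypo ⊤ (g-1) ω'|E.mX]) ω
        - ((E.μ[|E.cell gc 0])[fun ω' => E.Ypo ⊤ t ω' - E.Ypo ⊤ (g-1) ω'|E.mX]) ω) := by
  haveI := E.isProb
  revert htT hgct
  induction t, hgt using Nat.le_induction with
  | base =>
    intro htT hgct
    have hmax : max (g:ℕ∞) ((g:ℕ):ℕ∞) < gc := by
      rw [max_self]; exact hgct
    have h := hPT g hg gc hgc g le_rfl htT hmax
    exact h
  | succ t ht IH =>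
    intro htT hgct
    have htT' : t ≤ E.T := le_trans (Nat.le_succ t) htT
    have hgct' : (t:ℕ∞) < gc :=
      lt_of_le_of_lt (by exact_mod_cast Nat.le_succ t) hgct
    have hIH := IH htT' hgct'
    have hPT1 := hPT g hg gc hgc (t+1) (ht.trans (Nat.le_succ t)) htT
      (max_lt (lt_of_le_of_lt (by exact_mod_cast ht.trans (Nat.le_succ t)) hgct) hgct)
    simp only [Nat.add_sub_cancel] at hPT1
    have key : ∀ a ∈ E.𝒮, ∀ b ≤ 1,
        ((E.μ[|E.cell a b])[fun ω' => E.Ypo ⊤ (t+1) ω' - E.Ypo ⊤ (g-1) ω'|E.mX])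
          =ᵐ[E.μ]
        fun ω => ((E.μ[|E.cell a b])[fun ω' => E.Ypo ⊤ t ω' - E.Ypo ⊤ (g-1) ω'|E.mX]) ω
          + ((E.μ[|E.cell a b])[fun ω' => E.Ypo ⊤ (t+1) ω' - E.Ypo ⊤ t ω'|E.mX]) ω := by
      intro a ha b hb
      haveI := E.cond_prob ha hb
      set ν := E.μ[|E.cell a b] with hνdef
      have hint : ∀ s : ℕ, 1 ≤ s → s ≤ E.T → Integrable (E.Ypo ⊤ s) ν :=
        fun s hs1 hsT => E.integrable_cond (E.cell_pos ha hb) (E.hYpo ⊤ E.htop s hs1 hsT)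
      have hg11 : 1 ≤ g - 1 := by omega
      have hg1T : g - 1 ≤ E.T := by omega
      have hf1 : Integrable (fun ω' => E.Ypo ⊤ t ω' - E.Ypo ⊤ (g-1) ω') ν :=
        (hint t (by omega) htT').sub (hint (g-1) hg11 hg1T)
      have hf2 : Integrable (fun ω' => E.Ypo ⊤ (t+1) ω' - E.Ypo ⊤ t ω') ν :=
        (hint (t+1) (by omega) htT).sub (hint t (by omega) htT')
      have hsplit : (fun ω' => E.Ypo ⊤ (t+1) ω' - E.Ypo ⊤ (g-1) ω')
          = (fun ω' => E.Ypo ⊤ t ω' - E.Ypo ⊤ (g-1) ω')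
            + (fun ω' => E.Ypo ⊤ (t+1) ω' - E.Ypo ⊤ t ω') := by
        funext ω'; simp only [Pi.add_apply]; ring
      have hadd := condExp_add (μ := ν) (m := E.mX) hf1 hf2
      have hν : ν[fun ω' => E.Ypo ⊤ (t+1) ω' - E.Ypo ⊤ (g-1) ω'|E.mX]
          =ᵐ[ν] fun ω => (ν[fun ω' => E.Ypo ⊤ t ω' - E.Ypo ⊤ (g-1) ω'|E.mX]) ω
            + (ν[fun ω' => E.Ypo ⊤ (t+1) ω' - E.Ypo ⊤ t ω'|E.mX]) ω := by
        rw [hsplit]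
        exact hadd
      exact E.overlap_ae_eq hε (hov a ha b hb) stronglyMeasurable_condExp
        (stronglyMeasurable_condExp.add stronglyMeasurable_condExp) hν
    filter_upwards [hIH, hPT1, key (g:ℕ∞) hg 1 le_rfl, key (g:ℕ∞) hg 0 (by omega),
      key gc hgc 1 le_rfl, key gc hgc 0 (by omega)] with ω h1 h2 h3 h4 h5 h6
    rw [h3, h4, h5, h6]
    linarith

lemma mReg_eq_F0 {g t : ℕ} {g' : ℕ∞} (hg' : g' ∈ E.𝒮)
    {ε : ℝ} (hε : 0 < ε) (hov : ∀ᵐ ω ∂E.μ, ε < E.pX g' 0 ω) :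
    E.mReg g t g' 0 =ᵐ[E.μ]
      (E.μ[|E.cell g' 0])[fun ω => E.Ypo ⊤ t ω - E.Ypo ⊤ (g-1) ω|E.mX] := by
  haveI := E.isProb
  haveI := E.cond_prob hg' (by omega : (0:ℕ) ≤ 1)
  have hae : (fun ω => E.Yobs t ω - E.Yobs (g-1) ω) =ᵐ[E.μ[|E.cell g' 0]]
      (fun ω => E.Ypo ⊤ t ω - E.Ypo ⊤ (g-1) ω) := by
    filter_upwards [E.ae_cond_mem (E.measurableSet_cell g' 0)] with ω hω
    rw [E.Yobs_on_cell0 hω, E.Yobs_on_cell0 hω]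
  have h1 : E.mReg g t g' 0 =ᵐ[E.μ[|E.cell g' 0]]
      (E.μ[|E.cell g' 0])[fun ω => E.Ypo ⊤ t ω - E.Ypo ⊤ (g-1) ω|E.mX] := by
    simp only [mReg]
    exact condExp_congr_ae hae
  exact E.overlap_ae_eq hε hov (by simp only [mReg]; exact stronglyMeasurable_condExp)
    stronglyMeasurable_condExp h1

lemma mReg_eq_F1 {g t : ℕ} (hNA : E.NoAnticipation) {gc : ℕ∞} (hgc : gc ∈ E.𝒮)
    (hg2 : 2 ≤ g) (hgt : g ≤ t) (htT : t ≤ E.T) (hgct : (t:ℕ∞) < gc)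
    {ε : ℝ} (hε : 0 < ε) (hov : ∀ᵐ ω ∂E.μ, ε < E.pX gc 1 ω) :
    E.mReg g t gc 1 =ᵐ[E.μ]
      (E.μ[|E.cell gc 1])[fun ω => E.Ypo ⊤ t ω - E.Ypo ⊤ (g-1) ω|E.mX] := by
  haveI := E.isProb
  haveI := E.cond_prob hgc (le_refl 1)
  set ν := E.μ[|E.cell gc 1] with hνdef
  have ht1 : 1 ≤ t := by omega
  have hg11 : 1 ≤ g - 1 := by omega
  have hg1T : g - 1 ≤ E.T := by omega
  have hintc : ∀ a ∈ E.𝒮, Integrable (E.Ypo a t) ν ∧ Integrable (E.Ypo a (g-1)) ν :=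
    fun a ha => ⟨E.integrable_cond (E.cell_pos hgc le_rfl) (E.hYpo a ha t ht1 htT),
      E.integrable_cond (E.cell_pos hgc le_rfl) (E.hYpo a ha (g-1) hg11 hg1T)⟩
  have hsub_top : ν[fun ω => E.Ypo ⊤ t ω - E.Ypo ⊤ (g-1) ω|E.mX]
      =ᵐ[ν] fun ω => (ν[E.Ypo ⊤ t|E.mX]) ω - (ν[E.Ypo ⊤ (g-1)|E.mX]) ω := by
    have := condExp_sub (μ := ν) (m := E.mX) (hintc ⊤ E.htop).1 (hintc ⊤ E.htop).2
    exact this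
  have hae : (fun ω => E.Yobs t ω - E.Yobs (g-1) ω) =ᵐ[ν]
      (fun ω => E.Ypo gc t ω - E.Ypo gc (g-1) ω) := by
    filter_upwards [E.ae_cond_mem (E.measurableSet_cell gc 1)] with ω hω
    rw [E.Yobs_on_cell1 hω, E.Yobs_on_cell1 hω]
  have h1 : E.mReg g t gc 1 =ᵐ[ν]
      ν[fun ω => E.Ypo gc t ω - E.Ypo gc (g-1) ω|E.mX] := by
    simp only [mReg]
    exact condExp_congr_ae hae
  have hsub_gc : ν[fun ω => E.Ypo gc t ω - E.Ypo gc (g-1) ω|E.mX]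
      =ᵐ[ν] fun ω => (ν[E.Ypo gc t|E.mX]) ω - (ν[E.Ypo gc (g-1)|E.mX]) ω := by
    have := condExp_sub (μ := ν) (m := E.mX) (hintc gc hgc).1 (hintc gc hgc).2
    exact this
  -- lift the ν-a.e. statements to μ-a.e.
  have H1 : E.mReg g t gc 1 =ᵐ[E.μ]
      fun ω => (ν[E.Ypo gc t|E.mX]) ω - (ν[E.Ypo gc (g-1)|E.mX]) ω :=
    E.overlap_ae_eq hε hov (by simp only [mReg]; exact stronglyMeasurable_condExp)
      (stronglyMeasurable_condExp.sub stronglyMeasurable_condExp) (h1.trans hsub_gc)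
  have H2 : (fun ω => (ν[E.Ypo ⊤ t|E.mX]) ω - (ν[E.Ypo ⊤ (g-1)|E.mX]) ω)
      =ᵐ[E.μ] ν[fun ω => E.Ypo ⊤ t ω - E.Ypo ⊤ (g-1) ω|E.mX] :=
    E.overlap_ae_eq hε hov (stronglyMeasurable_condExp.sub stronglyMeasurable_condExp)
      stronglyMeasurable_condExp hsub_top.symm
  -- no anticipation : replace gc by ⊤
  have HNA : (fun ω => (ν[E.Ypo gc t|E.mX]) ω - (ν[E.Ypo gc (g-1)|E.mX]) ω)
      =ᵐ[E.μ] fun ω => (ν[E.Ypo ⊤ t|E.mX]) ω - (ν[E.Ypo ⊤ (g-1)|E.mX]) ω := by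
    rcases eq_or_ne gc ⊤ with rfl | hne
    · exact Filter.EventuallyEq.rfl
    · obtain ⟨n, hn2, hnT, rfl⟩ := E.h𝒮 gc hgc hne
      have htn : t < n := by exact_mod_cast hgct
      have hg1n : g - 1 < n := by omega
      have hNA1 := hNA n hgc t ht1 htn
      have hNA2 := hNA n hgc (g-1) hg11 hg1n
      filter_upwards [hNA1, hNA2] with ω e1 e2
      rw [← hνdef] at e1 e2
      rw [e1, e2]
  exact H1.trans (HNA.trans H2)

end Setup
end TripleDiff
open TripleDiff

open TripleDiff.Setup

/-- **Doubly robust identification (Theorem 1, DR part).**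
Under Assumptions SO, NA, and DDD-CPT, for every `g ∈ 𝒢_trt`, every `t` with
`g ≤ t ≤ T`, and every `g_c ∈ 𝒮` with `g_c > t`, `ATT(g,t) = ATT_dr,g_c(g,t)`. -/
theorem doubly_robust_identification {Ω : Type*} [MeasurableSpace Ω] {d : ℕ}
    (E : Setup Ω d)
    (hSO : E.StrongOverlap) (hNA : E.NoAnticipation) (hPT : E.ParallelTrends)
    (g : ℕ) (hg : (g : ℕ∞) ∈ E.𝒮) (t : ℕ) (hgt : g ≤ t) (htT : t ≤ E.T)
    (gc : ℕ∞) (hgc : gc ∈ E.𝒮) (hgct : (t : ℕ∞) < gc) :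
    E.ATT g t = E.ATTdr g t gc := by
  haveI := E.isProb
  obtain ⟨ε, hε, hov⟩ := hSO
  obtain ⟨n, hn2, hnT, hgn⟩ := E.h𝒮 (g:ℕ∞) hg (by simp)
  have hgn' : g = n := by exact_mod_cast hgn
  have hg2 : 2 ≤ g := by omega
  have hgT : g ≤ E.T := by omega
  have ht1 : 1 ≤ t := by omega
  have hg11 : 1 ≤ g - 1 := by omega
  have hg1T : g - 1 ≤ E.T := by omega
  haveI := E.cond_prob hg (le_refl 1)
  have hpos1 : E.μ (E.cell (g:ℕ∞) 1) ≠ 0 := E.cell_pos hg le_rfl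
  have hΔ : Integrable (fun ω => E.Yobs t ω - E.Yobs (g-1) ω) E.μ :=
    (E.integrable_Yobs t ht1 htT).sub (E.integrable_Yobs (g-1) hg11 hg1T)
  have hΔν₁ : Integrable (fun ω => E.Yobs t ω - E.Yobs (g-1) ω) (E.μ[|E.cell (g:ℕ∞) 1]) :=
    E.integrable_cond hpos1 hΔ
  -- integrability of the outcome regressions
  have hmμ : ∀ g' ∈ E.𝒮, ∀ q' ≤ 1, Integrable (E.mReg g t g' q') E.μ := by
    intro g' hg' q' hq'
    refine E.overlap_integrable hε (hov g' hg' q' hq')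
      (by simp only [mReg]; exact stronglyMeasurable_condExp) ?_
    simp only [mReg]; exact integrable_condExp
  have hmν₁ : ∀ g' ∈ E.𝒮, ∀ q' ≤ 1, Integrable (E.mReg g t g' q') (E.μ[|E.cell (g:ℕ∞) 1]) :=
    fun g' hg' q' hq' => E.integrable_cond hpos1 (hmμ g' hg' q' hq')
  -- generic evaluation of a DR term
  have hterm : ∀ g' ∈ E.𝒮, ∀ q' ≤ 1,
      ∫ ω, (E.wTrt g ω - E.wComp g g' q' ω) *
          (E.Yobs t ω - E.Yobs (g-1) ω - E.mReg g t g' q' ω) ∂E.μ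
        = ∫ ω, (E.Yobs t ω - E.Yobs (g-1) ω) ∂(E.μ[|E.cell (g:ℕ∞) 1])
          - ∫ ω, E.mReg g t g' q' ω ∂(E.μ[|E.cell (g:ℕ∞) 1]) := by
    intro g' hg' q' hq'
    have hint : Integrable (fun ω => E.Yobs t ω - E.Yobs (g-1) ω - E.mReg g t g' q' ω) E.μ :=
      hΔ.sub (hmμ g' hg' q' hq')
    have h1 : Integrable (fun ω => E.wTrt g ω *
        (E.Yobs t ω - E.Yobs (g-1) ω - E.mReg g t g' q' ω)) E.μ := by
      refine hint.bdd_mul (c := (E.μ (E.cell (g:ℕ∞) 1)).toReal⁻¹)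
        ((((measurable_const (a := (1:ℝ))).indicator
          (E.measurableSet_cell _ _)).div_const _).aestronglyMeasurable)
        (ae_of_all _ fun ω => ?_)
      by_cases hω : ω ∈ E.cell (g:ℕ∞) 1
      · rw [wTrt, Set.indicator_of_mem hω, Real.norm_eq_abs, abs_div, abs_one,
          abs_of_nonneg ENNReal.toReal_nonneg, one_div]
      · rw [wTrt, Set.indicator_of_notMem hω, zero_div, norm_zero]
        positivity
    have hoddsm : Measurable (E.oddsW g g' q') := by
      have hp1 : Measurable (E.pX (g:ℕ∞) 1) :=
        ((E.pX_stronglyMeasurable (g:ℕ∞) 1).measurable).mono E.hmle le_rfl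
      have hp2 : Measurable (E.pX g' q') :=
        ((E.pX_stronglyMeasurable g' q').measurable).mono E.hmle le_rfl
      exact (((measurable_const (a := (1:ℝ))).indicator
        (E.measurableSet_cell g' q')).mul hp1).div hp2
    have hodds_bd : ∀ᵐ ω ∂E.μ, ‖E.oddsW g g' q' ω‖ ≤ ε⁻¹ := by
      filter_upwards [hov g' hg' q' hq', E.pX_nonneg (g:ℕ∞) 1, E.pX_le_one (g:ℕ∞) 1]
        with ω h2 h3 h4
      by_cases hω : ω ∈ E.cell g' q'
      · rw [oddsW, Set.indicator_of_mem hω, one_mul, Real.norm_eq_abs,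
          abs_of_nonneg (div_nonneg h3 (hε.trans h2).le), ← one_div]
        exact div_le_div₀ zero_le_one h4 hε h2.le
      · rw [oddsW, Set.indicator_of_notMem hω, zero_mul, zero_div, norm_zero]
        positivity
    have h2 : Integrable (fun ω => E.wComp g g' q' ω *
        (E.Yobs t ω - E.Yobs (g-1) ω - E.mReg g t g' q' ω)) E.μ := by
      refine hint.bdd_mul (c := ε⁻¹ * |∫ ω', E.oddsW g g' q' ω' ∂E.μ|⁻¹)
        ((hoddsm.div_const _).aestronglyMeasurable) ?_
      filter_upwards [hodds_bd] with ω hb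
      rw [wComp, div_eq_mul_inv, norm_mul, Real.norm_eq_abs ((∫ ω', E.oddsW g g' q' ω' ∂E.μ)⁻¹),
        abs_inv]
      exact mul_le_mul_of_nonneg_right hb (by positivity)
    have hsplit : (fun ω => (E.wTrt g ω - E.wComp g g' q' ω) *
          (E.Yobs t ω - E.Yobs (g-1) ω - E.mReg g t g' q' ω))
        = fun ω => E.wTrt g ω * (E.Yobs t ω - E.Yobs (g-1) ω - E.mReg g t g' q' ω)
          - E.wComp g g' q' ω * (E.Yobs t ω - E.Yobs (g-1) ω - E.mReg g t g' q' ω) := by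
      funext ω; ring
    rw [hsplit, integral_sub h1 h2,
      E.wComp_orth hg' hq' hε (hov (g:ℕ∞) hg 1 le_rfl) (hov g' hg' q' hq') hΔ, sub_zero,
      E.wTrt_integral g (fun ω => E.Yobs t ω - E.Yobs (g-1) ω - E.mReg g t g' q' ω),
      integral_sub hΔν₁ (hmν₁ g' hg' q' hq')]
  -- identify the sum of the outcome regressions
  have hmsum_ae : (fun ω => E.mReg g t (g:ℕ∞) 0 ω + E.mReg g t gc 1 ω - E.mReg g t gc 0 ω)
      =ᵐ[E.μ]
      (E.μ[|E.cell (g:ℕ∞) 1])[fun ω => E.Ypo ⊤ t ω - E.Ypo ⊤ (g-1) ω|E.mX] := by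
    have h0 := E.mReg_eq_F0 (g := g) (t := t) hg hε (hov (g:ℕ∞) hg 0 (by omega))
    have h1 := E.mReg_eq_F1 hNA hgc hg2 hgt htT hgct hε (hov gc hgc 1 le_rfl)
    have h2 := E.mReg_eq_F0 (g := g) (t := t) hgc hε (hov gc hgc 0 (by omega))
    have hpt := E.PT_sum hPT hε hov hg hg2 hgc hgt htT hgct
    filter_upwards [h0, h1, h2, hpt] with ω e0 e1 e2 ept
    rw [e0, e1, e2]
    linarith
  -- integrability of potential outcomes on the treated cell
  have hIpo : ∀ a ∈ E.𝒮, ∀ s : ℕ, 1 ≤ s → s ≤ E.T →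
      Integrable (E.Ypo a s) (E.μ[|E.cell (g:ℕ∞) 1]) :=
    fun a ha s hs1 hsT => E.integrable_cond hpos1 (E.hYpo a ha s hs1 hsT)
  have hFint : Integrable (fun ω => E.Ypo ⊤ t ω - E.Ypo ⊤ (g-1) ω) (E.μ[|E.cell (g:ℕ∞) 1]) :=
    (hIpo ⊤ E.htop t ht1 htT).sub (hIpo ⊤ E.htop (g-1) hg11 hg1T)
  -- value of the sum of regressions on the treated cell
  have hsum_int : ∫ ω, E.mReg g t (g:ℕ∞) 0 ω ∂(E.μ[|E.cell (g:ℕ∞) 1])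
        + ∫ ω, E.mReg g t gc 1 ω ∂(E.μ[|E.cell (g:ℕ∞) 1])
        - ∫ ω, E.mReg g t gc 0 ω ∂(E.μ[|E.cell (g:ℕ∞) 1])
      = ∫ ω, E.Ypo ⊤ t ω ∂(E.μ[|E.cell (g:ℕ∞) 1])
        - ∫ ω, E.Ypo ⊤ (g-1) ω ∂(E.μ[|E.cell (g:ℕ∞) 1]) := by
    have e2 : ∫ ω, (E.mReg g t (g:ℕ∞) 0 ω + E.mReg g t gc 1 ω - E.mReg g t gc 0 ω)
          ∂(E.μ[|E.cell (g:ℕ∞) 1])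
        = ∫ ω, E.mReg g t (g:ℕ∞) 0 ω ∂(E.μ[|E.cell (g:ℕ∞) 1])
          + ∫ ω, E.mReg g t gc 1 ω ∂(E.μ[|E.cell (g:ℕ∞) 1])
          - ∫ ω, E.mReg g t gc 0 ω ∂(E.μ[|E.cell (g:ℕ∞) 1]) := by
      have hfadd : Integrable (fun ω => E.mReg g t (g:ℕ∞) 0 ω + E.mReg g t gc 1 ω)
          (E.μ[|E.cell (g:ℕ∞) 1]) :=
        (hmν₁ (g:ℕ∞) hg 0 (by omega)).add (hmν₁ gc hgc 1 le_rfl)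
      rw [integral_sub hfadd (hmν₁ gc hgc 0 (by omega)),
        integral_add (hmν₁ (g:ℕ∞) hg 0 (by omega)) (hmν₁ gc hgc 1 le_rfl)]
    rw [← e2, integral_congr_ae (E.ae_cond_of_ae hmsum_ae), integral_condExp E.hmle,
      integral_sub (hIpo ⊤ E.htop t ht1 htT) (hIpo ⊤ E.htop (g-1) hg11 hg1T)]
  -- value of the observed difference on the treated cell
  have hΔ₁ : ∫ ω, (E.Yobs t ω - E.Yobs (g-1) ω) ∂(E.μ[|E.cell (g:ℕ∞) 1])
      = ∫ ω, E.Ypo (g:ℕ∞) t ω ∂(E.μ[|E.cell (g:ℕ∞) 1])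
        - ∫ ω, E.Ypo ⊤ (g-1) ω ∂(E.μ[|E.cell (g:ℕ∞) 1]) := by
    have hae : (fun ω => E.Yobs t ω - E.Yobs (g-1) ω) =ᵐ[E.μ[|E.cell (g:ℕ∞) 1]]
        fun ω => E.Ypo (g:ℕ∞) t ω - E.Ypo (g:ℕ∞) (g-1) ω := by
      filter_upwards [E.ae_cond_mem (E.measurableSet_cell (g:ℕ∞) 1)] with ω hω
      rw [E.Yobs_on_cell1 hω, E.Yobs_on_cell1 hω]
    rw [integral_congr_ae hae,
      integral_sub (hIpo (g:ℕ∞) hg t ht1 htT) (hIpo (g:ℕ∞) hg (g-1) hg11 hg1T)]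
    have hna := hNA g hg (g-1) hg11 (by omega)
    have : ∫ ω, E.Ypo (g:ℕ∞) (g-1) ω ∂(E.μ[|E.cell (g:ℕ∞) 1])
        = ∫ ω, E.Ypo ⊤ (g-1) ω ∂(E.μ[|E.cell (g:ℕ∞) 1]) := by
      rw [← integral_condExp (μ := E.μ[|E.cell (g:ℕ∞) 1]) E.hmle
          (f := E.Ypo (g:ℕ∞) (g-1)),
        integral_congr_ae (E.ae_cond_of_ae hna),
        integral_condExp E.hmle]
    rw [this]
  -- assemble
  have hATTdr : E.ATTdr g t gc
      = ∫ ω, (E.Yobs t ω - E.Yobs (g-1) ω) ∂(E.μ[|E.cell (g:ℕ∞) 1])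
        - (∫ ω, E.mReg g t (g:ℕ∞) 0 ω ∂(E.μ[|E.cell (g:ℕ∞) 1])
          + ∫ ω, E.mReg g t gc 1 ω ∂(E.μ[|E.cell (g:ℕ∞) 1])
          - ∫ ω, E.mReg g t gc 0 ω ∂(E.μ[|E.cell (g:ℕ∞) 1])) := by
    rw [ATTdr, hterm (g:ℕ∞) hg 0 (by omega), hterm gc hgc 1 le_rfl, hterm gc hgc 0 (by omega)]
    ring
  rw [hATTdr, hsum_int, hΔ₁, ATT,
    integral_sub (hIpo (g:ℕ∞) hg t ht1 htT) (hIpo ⊤ E.htop t ht1 htT)]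
  ring
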